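/- There exists a universal constant κ ∈ (0,∞) such that for every T > 0, every Γ as in the context with ‖Γ‖_∞ < ∞, every δ > 0, every measurable map q : [0,T] → Ŝ and every measurable g : X_T → [0,∞) with ∫_{X_T} ℓ(g(s,y)) λ(ds dy) ≤ δ, one has ∫_{X_T} ‖G(q(s),y)‖² g(s,y) λ(ds dy) ≤ κ δ + 4 ‖Γ‖_∞ T. -/

import Mathlib

noncomputable section
open MeasureTheory

/-- The Hilbert space `ℓ²(ℕ)` of square-summable real sequences. -/
abbrev H2 : Type := lp (fun _ : ℕ => ℝ) 2

/-- The simplex `Ŝ` of probability vectors in `ℓ²(ℕ)`. -/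
def simplexS : Set H2 := {q | (∀ i, 0 ≤ q i) ∧ HasSum (fun i => q i) 1}

/-- The set `A_ij(q) ⊆ X = [0,∞)²` (here `K` plays the role of `‖Γ‖_∞`). -/
def Aset (K : ℝ) (Γ : H2 → ℕ → ℕ → ℝ) (q : H2) (i j : ℕ) : Set (ℝ × ℝ) :=
  Set.Ioc (i : ℝ) (i + 1) ×ˢ Set.Ioc ((j : ℝ) * K) ((j : ℝ) * K + q i * Γ q i j)

/-- The map `G : Ŝ × X → ℓ²(ℕ)`, `G(q,y) = ∑_{i ≠ j} (e_j − e_i) 1_{A_ij(q)}(y)`: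
since the `A_ij(q)` are pairwise disjoint, `G(q,y) = e_j − e_i` for the (unique)
pair `(i,j)`, `i ≠ j`, with `y ∈ A_ij(q)`, and `G(q,y) = 0` otherwise. -/
def Gmap (K : ℝ) (Γ : H2 → ℕ → ℕ → ℝ) (q : H2) (y : ℝ × ℝ) : H2 :=
  @dite _ (∃ p : ℕ × ℕ, p.1 ≠ p.2 ∧ y ∈ Aset K Γ q p.1 p.2) (Classical.dec _)
    (fun h => lp.single 2 h.choose.2 1 - lp.single 2 h.choose.1 1) (fun _ => 0)

/-- The rate matrix hypotheses: `Γ_ij(q) ≥ 0` for `i ≠ j`,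
`Γ_ii(q) = −∑_{j≠i} Γ_ij(q)` (a convergent sum), and `K` is an upper bound for
`sup_{q∈Ŝ} sup_i |Γ_ii(q)|` (i.e. `‖Γ‖_∞ ≤ K < ∞`). -/
structure RateMatrix (K : ℝ) (Γ : H2 → ℕ → ℕ → ℝ) : Prop where
  nonneg : ∀ q ∈ simplexS, ∀ i j, i ≠ j → 0 ≤ Γ q i j
  diag : ∀ q ∈ simplexS, ∀ i,
    HasSum (fun j => if j = i then 0 else Γ q i j) (-(Γ q i i))
  bound : ∀ q ∈ simplexS, ∀ i, |Γ q i i| ≤ K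


/-- `ℓ(r) = r log r - r + 1` (with `ℓ(0) = 1`, which holds since `Real.log 0 = 0`). -/
def ell (r : ℝ) : ℝ := r * Real.log r - r + 1

/-- The measure `λ` on `X_T = [0,T] × X`: (Lebesgue on `[0,T]`) ⊗ (Lebesgue on `X`). -/
def XTmeas (T : ℝ) : Measure (ℝ × (ℝ × ℝ)) :=
  (volume.restrict (Set.Icc (0 : ℝ) T)).prod volume

/-!
On the support of `G(q, ·)`, the union of the rectangles `A_ij(q)`, one has `‖G‖² = 2`, and the
Fenchel–Young inequality `r ≤ ℓ(r) + (e - 1)` for `ℓ` and its conjugate `p ↦ eᵖ - 1` gives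
`‖G‖² g ≤ 2 ℓ(g) + 4` there; off the support the integrand vanishes. The support has area
`∑_{i ≠ j} q_i Γ_ij(q) = ∑_i q_i |Γ_ii(q)| ≤ ‖Γ‖_∞`, so integrating over `X_T` gives the bound
with `κ = 2`.
-/

open scoped ENNReal

lemma mul_le_ell_add_exp_sub_one {r : ℝ} (hr : 0 ≤ r) (a : ℝ) :
    a * r ≤ ell r + (Real.exp a - 1) := by
  rcases hr.eq_or_lt with rfl | hr
  · simp [ell, (Real.exp_pos a).le]
  · -- `exp a - 1` is the convex conjugate of `ell`: apply `log x ≤ x - 1` at `x = exp a / r`.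
    have hlog := Real.log_le_sub_one_of_pos (div_pos (Real.exp_pos a) hr)
    rw [Real.log_div (Real.exp_ne_zero a) hr.ne', Real.log_exp] at hlog
    have h := mul_le_mul_of_nonneg_left hlog hr.le
    rw [mul_sub, mul_sub, mul_one, mul_div_cancel₀ _ hr.ne'] at h
    unfold ell
    linarith

lemma measurable_ell : Measurable ell := by
  unfold ell
  fun_prop

lemma lp.norm_single_sub_single_sq {ι : Type*} [DecidableEq ι] {i j : ι} (hij : i ≠ j) :
    ‖(lp.single 2 j 1 - lp.single 2 i 1 : lp (fun _ : ι => ℝ) 2)‖ ^ 2 = 2 := by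
  have h2 : (0 : ℝ≥0∞) < 2 := by norm_num
  have hinner : inner ℝ (lp.single 2 j (1 : ℝ) : lp (fun _ : ι => ℝ) 2) (lp.single 2 i 1) = 0 := by
    simp [lp.inner_single_left, hij.symm]
  rw [norm_sub_sq_real, hinner, lp.norm_single h2, lp.norm_single h2]
  norm_num

def Aunion (K : ℝ) (Γ : H2 → ℕ → ℕ → ℝ) (q : H2) : Set (ℝ × ℝ) :=
  ⋃ (i : ℕ) (j : ℕ) (_ : i ≠ j), Aset K Γ q i j

lemma measurableSet_Aunion (K : ℝ) (Γ : H2 → ℕ → ℕ → ℝ) (q : H2) :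
    MeasurableSet (Aunion K Γ q) :=
  .iUnion fun _ => .iUnion fun _ => .iUnion fun _ => measurableSet_Ioc.prod measurableSet_Ioc

lemma sq_norm_Gmap (K : ℝ) (Γ : H2 → ℕ → ℕ → ℝ) (q : H2) (y : ℝ × ℝ) :
    ‖Gmap K Γ q y‖ ^ 2 = (Aunion K Γ q).indicator 2 y := by
  have hmem : y ∈ Aunion K Γ q ↔ ∃ p : ℕ × ℕ, p.1 ≠ p.2 ∧ y ∈ Aset K Γ q p.1 p.2 := by
    simp [Aunion]
  unfold Gmap
  split_ifs with h
  · rw [Set.indicator_of_mem (hmem.2 h), lp.norm_single_sub_single_sq h.choose_spec.1]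
    rfl
  · rw [Set.indicator_of_notMem (mt hmem.1 h)]
    simp

lemma volume_Aset (K : ℝ) (Γ : H2 → ℕ → ℕ → ℝ) (q : H2) (i j : ℕ) :
    volume (Aset K Γ q i j) = ENNReal.ofReal (q i * Γ q i j) := by
  rw [Aset, Measure.volume_eq_prod, Measure.prod_prod, Real.volume_Ioc, Real.volume_Ioc]
  simp

section RateMatrix

variable {K : ℝ} {Γ : H2 → ℕ → ℕ → ℝ} {q : H2}

lemma RateMatrix.tsum_volume_offDiag_Aset_le (hΓ : RateMatrix K Γ) (hq : q ∈ simplexS) (i : ℕ) :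
    ∑' j, volume (⋃ (_ : i ≠ j), Aset K Γ q i j) ≤ ENNReal.ofReal (q i * K) := by
  have hrow : HasSum (fun j => q i * if j = i then 0 else Γ q i j) (q i * -Γ q i i) :=
    (hΓ.diag q hq i).mul_left _
  have hnonneg : ∀ j, 0 ≤ q i * if j = i then 0 else Γ q i j := fun j =>
    mul_nonneg (hq.1 i) (by split_ifs with h; exacts [le_rfl, hΓ.nonneg q hq i j (Ne.symm h)])
  calc ∑' j, volume (⋃ (_ : i ≠ j), Aset K Γ q i j)
      = ∑' j, ENNReal.ofReal (q i * if j = i then 0 else Γ q i j) := by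
        refine tsum_congr fun j => ?_
        by_cases hij : i = j
        · simp [hij]
        · simp [hij, Ne.symm hij, volume_Aset]
    _ = ENNReal.ofReal (q i * -Γ q i i) := by
        rw [← ENNReal.ofReal_tsum_of_nonneg hnonneg hrow.summable, hrow.tsum_eq]
    _ ≤ ENNReal.ofReal (q i * K) :=
        ENNReal.ofReal_le_ofReal <|
          mul_le_mul_of_nonneg_left ((neg_le_abs _).trans (hΓ.bound q hq i)) (hq.1 i)

lemma RateMatrix.volume_Aunion_le (hΓ : RateMatrix K Γ) (hq : q ∈ simplexS) :
    volume (Aunion K Γ q) ≤ ENNReal.ofReal K := by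
  have hK : 0 ≤ K := (abs_nonneg _).trans (hΓ.bound q hq 0)
  have hcol : HasSum (fun i => q i * K) K := by simpa using hq.2.mul_right K
  calc volume (Aunion K Γ q)
      ≤ ∑' i, ∑' j, volume (⋃ (_ : i ≠ j), Aset K Γ q i j) :=
        (measure_iUnion_le _).trans (ENNReal.tsum_le_tsum fun _ => measure_iUnion_le _)
    _ ≤ ∑' i, ENNReal.ofReal (q i * K) := ENNReal.tsum_le_tsum (hΓ.tsum_volume_offDiag_Aset_le hq)
    _ = ENNReal.ofReal K := by
        rw [← ENNReal.ofReal_tsum_of_nonneg (fun i => mul_nonneg (hq.1 i) hK) hcol.summable,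
          hcol.tsum_eq]

lemma ofReal_sq_norm_Gmap_mul_le (y : ℝ × ℝ) {r : ℝ} (hr : 0 ≤ r) :
    ENNReal.ofReal (‖Gmap K Γ q y‖ ^ 2 * r) ≤
      2 * ENNReal.ofReal (ell r) + (Aunion K Γ q).indicator 4 y := by
  rw [sq_norm_Gmap]
  by_cases hy : y ∈ Aunion K Γ q
  · have hr' : 2 * r ≤ 2 * ell r + 4 := by
      have := mul_le_ell_add_exp_sub_one hr 1
      linarith [Real.exp_one_lt_three]
    rw [Set.indicator_of_mem hy, Set.indicator_of_mem hy]
    calc ENNReal.ofReal (2 * r) ≤ ENNReal.ofReal (2 * ell r + 4) := ENNReal.ofReal_le_ofReal hr'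
      _ ≤ ENNReal.ofReal (2 * ell r) + ENNReal.ofReal 4 := ENNReal.ofReal_add_le
      _ = _ := by simp [ENNReal.ofReal_mul]
  · simp [hy]

lemma RateMatrix.lintegral_sq_norm_Gmap_mul_le (hΓ : RateMatrix K Γ) (hq : q ∈ simplexS)
    {f : ℝ × ℝ → ℝ} (hf : Measurable f) (hf₀ : ∀ y, 0 ≤ f y) :
    ∫⁻ y, ENNReal.ofReal (‖Gmap K Γ q y‖ ^ 2 * f y) ≤
      2 * (∫⁻ y, ENNReal.ofReal (ell (f y))) + 4 * ENNReal.ofReal K :=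
  calc ∫⁻ y, ENNReal.ofReal (‖Gmap K Γ q y‖ ^ 2 * f y)
      ≤ ∫⁻ y, (2 * ENNReal.ofReal (ell (f y)) + (Aunion K Γ q).indicator 4 y) :=
        lintegral_mono fun y => ofReal_sq_norm_Gmap_mul_le y (hf₀ y)
    _ = 2 * (∫⁻ y, ENNReal.ofReal (ell (f y))) + 4 * volume (Aunion K Γ q) := by
        have hell : Measurable fun y => ENNReal.ofReal (ell (f y)) :=
          (measurable_ell.comp hf).ennreal_ofReal
        rw [lintegral_add_left (hell.const_mul 2), lintegral_const_mul 2 hell,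
          lintegral_indicator (measurableSet_Aunion K Γ q), Pi.ofNat_def, setLIntegral_const]
    _ ≤ 2 * (∫⁻ y, ENNReal.ofReal (ell (f y))) + 4 * ENNReal.ofReal K := by
        gcongr
        exact hΓ.volume_Aunion_le hq

end RateMatrix

/-- There is a universal constant `κ ∈ (0,∞)` such that for every `T > 0`, every
rate matrix `Γ` with `‖Γ‖_∞ ≤ K < ∞`, every `δ > 0`, every measurable
`q : [0,T] → Ŝ` and every measurable `g : X_T → [0,∞)` with
`∫_{X_T} ℓ(g) dλ ≤ δ`, one has
`∫_{X_T} ‖G(q(s),y)‖² g(s,y) λ(ds dy) ≤ κ δ + 4 ‖Γ‖_∞ T`. -/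
theorem stmt10 :
    ∃ κ : ℝ, 0 < κ ∧
      ∀ T : ℝ, 0 < T → ∀ K : ℝ, 0 ≤ K →
      ∀ Γ : H2 → ℕ → ℕ → ℝ, RateMatrix K Γ →
      ∀ δ : ℝ, 0 < δ →
      ∀ q : ℝ → H2, StronglyMeasurable q → (∀ s, q s ∈ simplexS) →
      ∀ g : ℝ × (ℝ × ℝ) → ℝ, Measurable g → (∀ z, 0 ≤ g z) →
      (∫⁻ z, ENNReal.ofReal (ell (g z)) ∂(XTmeas T) ≤ ENNReal.ofReal δ) →
      ∫⁻ z, ENNReal.ofReal (‖Gmap K Γ (q z.1) z.2‖ ^ 2 * g z) ∂(XTmeas T)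
        ≤ ENNReal.ofReal (κ * δ + 4 * K * T) := by
  refine ⟨2, two_pos, fun T hT K hK Γ hΓ δ hδ q _ hq g hg hg₀ hgδ => ?_⟩
  have hell : Measurable fun z => ENNReal.ofReal (ell (g z)) :=
    (measurable_ell.comp hg).ennreal_ofReal
  -- The integrand need not be measurable (`Γ` is arbitrary in `q`), so only the Tonelli
  -- inequality `lintegral_prod_le` is available for the first step.
  calc ∫⁻ z, ENNReal.ofReal (‖Gmap K Γ (q z.1) z.2‖ ^ 2 * g z) ∂(XTmeas T)
      ≤ ∫⁻ s in Set.Icc 0 T, ∫⁻ y, ENNReal.ofReal (‖Gmap K Γ (q s) y‖ ^ 2 * g (s, y)) :=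
        lintegral_prod_le _
    _ ≤ ∫⁻ s in Set.Icc 0 T,
          (2 * (∫⁻ y, ENNReal.ofReal (ell (g (s, y)))) + 4 * ENNReal.ofReal K) :=
        lintegral_mono fun s => hΓ.lintegral_sq_norm_Gmap_mul_le (hq s)
          (hg.comp measurable_prodMk_left) fun y => hg₀ (s, y)
    _ = 2 * ∫⁻ z, ENNReal.ofReal (ell (g z)) ∂(XTmeas T)
          + 4 * ENNReal.ofReal K * ENNReal.ofReal T := by
        rw [lintegral_add_right _ measurable_const,
          lintegral_const_mul 2 hell.lintegral_prod_right', XTmeas,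
          lintegral_prod _ hell.aemeasurable, setLIntegral_const, Real.volume_Icc, sub_zero]
    _ ≤ 2 * ENNReal.ofReal δ + 4 * ENNReal.ofReal K * ENNReal.ofReal T := by gcongr
    _ = ENNReal.ofReal (2 * δ + 4 * K * T) := by
        rw [ENNReal.ofReal_add (by positivity) (by positivity), ENNReal.ofReal_mul (by positivity),
          ENNReal.ofReal_mul (by positivity), ENNReal.ofReal_mul (by positivity)]
        norm_num
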